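/- Assume φ(p)φ(q) ≠ 0. For any a₀,…,a_m ∈ ℂ[x], in M_φ one has (p − φ(p))ᵐ·(Σ_{i=0}^{m} fⁱ aᵢ(C)·w) = (−1)ᵐ m! φ(q)ᵐ a_m(C)·w. -/

import Mathlib

open UniversalEnvelopingAlgebra Polynomial

namespace QW

variable {S : Type} [LieRing S] [LieAlgebra ℂ S]

/-- The chosen elements `e, h, f, p, q, z` form a basis of `S` and satisfy the
structure constants of the Schrödinger algebra. -/
structure IsSchrodinger (e h f p q z : S) : Prop where
  indep : LinearIndependent ℂ ![e, h, f, p, q, z]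
  spans : Submodule.span ℂ (Set.range ![e, h, f, p, q, z]) = ⊤
  lie_he : ⁅h, e⁆ = (2 : ℂ) • e
  lie_hf : ⁅h, f⁆ = (-2 : ℂ) • f
  lie_ef : ⁅e, f⁆ = h
  lie_hp : ⁅h, p⁆ = p
  lie_hq : ⁅h, q⁆ = -q
  lie_pq : ⁅p, q⁆ = z
  lie_eq : ⁅e, q⁆ = p
  lie_pf : ⁅p, f⁆ = -q
  lie_fq : ⁅f, q⁆ = 0
  lie_ep : ⁅e, p⁆ = 0
  lie_ze : ⁅z, e⁆ = 0
  lie_zh : ⁅z, h⁆ = 0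
  lie_zf : ⁅z, f⁆ = 0
  lie_zp : ⁅z, p⁆ = 0
  lie_zq : ⁅z, q⁆ = 0

/-- `v` is a quasi-Whittaker vector of type `φ`, where the Lie algebra homomorphism
`φ : ℌ → ℂ` is recorded by its values `φp = φ(p)`, `φq = φ(q)` (necessarily `φ(z) = 0`). -/
def IsQWVector (p q z : S) {V : Type} [AddCommGroup V] [Module ℂ V] [LieRingModule S V]
    (φp φq : ℂ) (v : V) : Prop :=
  v ≠ 0 ∧ ⁅p, v⁆ = φp • v ∧ ⁅q, v⁆ = φq • v ∧ ⁅z, v⁆ = 0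

/-- `V` is a quasi-Whittaker module of type `φ`: it is generated by a
quasi-Whittaker vector of type `φ`. -/
def IsQWModule (p q z : S) (V : Type) [AddCommGroup V] [Module ℂ V]
    [LieRingModule S V] [LieModule ℂ S V] (φp φq : ℂ) : Prop :=
  ∃ v : V, IsQWVector p q z φp φq v ∧ LieSubmodule.lieSpan ℂ S {v} = ⊤

/-- The action of the universal enveloping algebra `U(𝔖)` on a `𝔖`-module. -/
noncomputable def uact {V : Type} [AddCommGroup V] [Module ℂ V] [LieRingModule S V]
    [LieModule ℂ S V] (u : UniversalEnvelopingAlgebra ℂ S) (v : V) : V :=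
  UniversalEnvelopingAlgebra.lift ℂ (LieModule.toEnd ℂ S V) u v

/-- The element `C = φ(p)²f − φ(q)²e − φ(p)φ(q)h ∈ U(𝔖)`. -/
noncomputable def Cel (e h f : S) (φp φq : ℂ) : UniversalEnvelopingAlgebra ℂ S :=
  φp ^ 2 • ι ℂ f - φq ^ 2 • ι ℂ e - (φp * φq) • ι ℂ h

/-- The element `C₀ = p²f − q²e − hpq ∈ U(𝔖)`. -/
noncomputable def C0 (e h f p q : S) : UniversalEnvelopingAlgebra ℂ S :=
  ι ℂ p ^ 2 * ι ℂ f - ι ℂ q ^ 2 * ι ℂ e - ι ℂ h * ι ℂ p * ι ℂ q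

/-- `δ_{a,0}`, as a complex scalar. -/
noncomputable def dC (a : ℂ) : ℂ := if a = 0 then 1 else 0

/-- `δ_{a,0}`, as a natural number. -/
noncomputable def dN (a : ℂ) : ℕ := if a = 0 then 1 else 0

/-- `X = δ_{φ(q),0}e + δ_{φ(p),0}f`. -/
noncomputable def Xel (e f : S) (φp φq : ℂ) : UniversalEnvelopingAlgebra ℂ S :=
  dC φq • ι ℂ e + dC φp • ι ℂ f

/-- `P₊ = δ_{φ(p),0}p + δ_{φ(q),0}q`. -/
noncomputable def Pplus (p q : S) (φp φq : ℂ) : UniversalEnvelopingAlgebra ℂ S :=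
  dC φp • ι ℂ p + dC φq • ι ℂ q

/-- `P₋ = δ_{φ(q),0}p + δ_{φ(p),0}q`. -/
noncomputable def Pminus (p q : S) (φp φq : ℂ) : UniversalEnvelopingAlgebra ℂ S :=
  dC φq • ι ℂ p + dC φp • ι ℂ q

/-- The quotient of `U(𝔖)` by a left ideal `I` is a Lie module over `S`. -/
noncomputable instance instLieRingModuleUQuot
    (I : Submodule (UniversalEnvelopingAlgebra ℂ S) (UniversalEnvelopingAlgebra ℂ S)) :
    LieRingModule S (UniversalEnvelopingAlgebra ℂ S ⧸ I) where
  bracket x m := ι ℂ x • m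
  add_lie x y m := by
    show ι ℂ (x + y) • m = ι ℂ x • m + ι ℂ y • m
    rw [map_add, add_smul]
  lie_add x m n := by
    show ι ℂ x • (m + n) = ι ℂ x • m + ι ℂ x • n
    rw [smul_add]
  leibniz_lie x y m := by
    show ι ℂ x • (ι ℂ y • m) = ι ℂ ⁅x, y⁆ • m + ι ℂ y • (ι ℂ x • m)
    let := LieRing.ofAssociativeRing (A := UniversalEnvelopingAlgebra ℂ S)
    rw [LieHom.map_lie, Ring.lie_def, sub_smul, mul_smul, mul_smul]
    abel

noncomputable instance instLieModuleUQuot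
    (I : Submodule (UniversalEnvelopingAlgebra ℂ S) (UniversalEnvelopingAlgebra ℂ S)) :
    LieModule ℂ S (UniversalEnvelopingAlgebra ℂ S ⧸ I) where
  smul_lie c x m := by
    show ι ℂ (c • x) • m = c • (ι ℂ x • m)
    rw [map_smul, smul_assoc]
  lie_smul c x m := by
    show ι ℂ x • (c • m) = c • (ι ℂ x • m)
    rw [← algebraMap_smul (UniversalEnvelopingAlgebra ℂ S) c m, ← mul_smul,
      ← Algebra.commutes, mul_smul, algebraMap_smul]

/-- The left ideal of `U(𝔖)` generated by `p − φ(p)1`, `q − φ(q)1` and `z`. -/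
noncomputable def qwIdeal (p q z : S) (φp φq : ℂ) :
    Submodule (UniversalEnvelopingAlgebra ℂ S) (UniversalEnvelopingAlgebra ℂ S) :=
  Submodule.span _
    {ι ℂ p - algebraMap ℂ _ φp, ι ℂ q - algebraMap ℂ _ φq, ι ℂ z}

/-- The universal quasi-Whittaker module `M_φ = U(𝔖) ⊗_{U(ℌ)} ℂ_φ`, realised as the
quotient of `U(𝔖)` by the left ideal generated by `p − φ(p)1`, `q − φ(q)1`, `z`. -/
noncomputable abbrev Mphi (p q z : S) (φp φq : ℂ) : Type :=
  UniversalEnvelopingAlgebra ℂ S ⧸ qwIdeal p q z φp φq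

/-- The cyclic quasi-Whittaker vector `w = 1 ⊗ w` of `M_φ`. -/
noncomputable def wvec (p q z : S) (φp φq : ℂ) : Mphi p q z φp φq :=
  Submodule.Quotient.mk 1

/-- The submodule `W_{φ,ξ} = U(𝔖)(C − ξ)·w` of `M_φ`. -/
noncomputable def Wsub (e h f p q z : S) (φp φq ξ : ℂ) :
    LieSubmodule ℂ S (Mphi p q z φp φq) :=
  LieSubmodule.lieSpan ℂ S
    {uact (Cel e h f φp φq - algebraMap ℂ _ ξ) (wvec p q z φp φq)}

/-- The quotient module `L_{φ,ξ} = M_φ / W_{φ,ξ}`. -/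
noncomputable abbrev Lphi (e h f p q z : S) (φp φq ξ : ℂ) : Type :=
  Mphi p q z φp φq ⧸ Wsub e h f p q z φp φq ξ

/-- A (finite, decreasing) composition series `⊤ = W 0 > W 1 > ⋯ > W n = ⊥`
of a Lie module, with all the successive quotients irreducible. -/
def IsCompositionChain {V : Type} [AddCommGroup V] [Module ℂ V] [LieRingModule S V]
    [LieModule ℂ S V] {n : ℕ} (W : Fin (n + 1) → LieSubmodule ℂ S V) : Prop :=
  W 0 = ⊤ ∧ W (Fin.last n) = ⊥ ∧
    ∀ i : Fin n, W i.succ < W i.castSucc ∧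
      LieModule.IsIrreducible ℂ S
        (↥(W i.castSucc) ⧸ LieSubmodule.comap (W i.castSucc).incl (W i.succ))


-- ======= auxiliary material =======
section Aux

variable (I : Submodule (UniversalEnvelopingAlgebra ℂ S) (UniversalEnvelopingAlgebra ℂ S))

set_option maxHeartbeats 1000000 in
lemma uact_mk (u x : UniversalEnvelopingAlgebra ℂ S) :
    uact u (Submodule.Quotient.mk x : UniversalEnvelopingAlgebra ℂ S ⧸ I) =
      Submodule.Quotient.mk (u * x) := by
  have key : UniversalEnvelopingAlgebra.lift ℂ
      (LieModule.toEnd ℂ S (UniversalEnvelopingAlgebra ℂ S ⧸ I)) =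
      Algebra.lsmul ℂ ℂ (UniversalEnvelopingAlgebra ℂ S ⧸ I) := by
    symm
    rw [← UniversalEnvelopingAlgebra.lift_unique]
    funext y
    ext m
    rfl
  unfold uact
  rw [key]
  show u • (Submodule.Quotient.mk x : UniversalEnvelopingAlgebra ℂ S ⧸ I) = _
  rw [← Submodule.Quotient.mk_smul]
  rfl

end Aux

section Calc

variable (e h f p q z : S) (φp φq : ℂ)

/-- The auxiliary element `u = φ(q)p − φ(p)q`. -/
noncomputable def Uel : UniversalEnvelopingAlgebra ℂ S := φq • ι ℂ p - φp • ι ℂ q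

variable {e h f p q z}

lemma comm_of_lie {x y : S} {w : S} (hw : ⁅x, y⁆ = w) :
    ι ℂ x * ι ℂ y = ι ℂ y * ι ℂ x + ι ℂ w := by
  let := LieRing.ofAssociativeRing (A := UniversalEnvelopingAlgebra ℂ S)
  have : ι ℂ ⁅x, y⁆ = ⁅ι ℂ x, ι ℂ y⁆ := LieHom.map_lie _ _ _
  rw [hw, Ring.lie_def] at this
  rw [← sub_eq_iff_eq_add']
  exact this.symm

variable (hS : IsSchrodinger e h f p q z)
include hS

lemma P_mul_C :
    ι ℂ p * Cel e h f φp φq = Cel e h f φp φq * ι ℂ p + φp • Uel p q φp φq := by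
  have h1 := comm_of_lie hS.lie_pf
  have h2 : ι ℂ p * ι ℂ e = ι ℂ e * ι ℂ p + ι ℂ (0 : S) := by
    have h0 : ⁅p, e⁆ = (0 : S) := by rw [← lie_skew, hS.lie_ep, neg_zero]
    exact comm_of_lie h0
  have h3 : ι ℂ p * ι ℂ h = ι ℂ h * ι ℂ p + ι ℂ (-p) := by
    have h0 : ⁅p, h⁆ = -p := by rw [← lie_skew, hS.lie_hp]
    exact comm_of_lie h0
  simp only [Cel, Uel, mul_sub, sub_mul, mul_smul_comm, smul_mul_assoc, h1, h2, h3,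
    map_neg, map_zero]
  module

lemma Q_mul_C :
    ι ℂ q * Cel e h f φp φq = Cel e h f φp φq * ι ℂ q + φq • Uel p q φp φq := by
  have h1 : ι ℂ q * ι ℂ f = ι ℂ f * ι ℂ q + ι ℂ (0 : S) := by
    have : ⁅q, f⁆ = (0 : S) := by rw [← lie_skew, hS.lie_fq, neg_zero]
    exact comm_of_lie this
  have h2 : ι ℂ q * ι ℂ e = ι ℂ e * ι ℂ q + ι ℂ (-p) := by
    have : ⁅q, e⁆ = -p := by rw [← lie_skew, hS.lie_eq]
    exact comm_of_lie this
  have h3 : ι ℂ q * ι ℂ h = ι ℂ h * ι ℂ q + ι ℂ q := by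
    have : ⁅q, h⁆ =
        - -q := by rw [← lie_skew, hS.lie_hq]
    simpa using comm_of_lie this
  simp only [Cel, Uel, mul_sub, sub_mul, mul_smul_comm, smul_mul_assoc, h1, h2, h3,
    map_neg, map_zero]
  module

lemma U_mul_C :
    Uel p q φp φq * Cel e h f φp φq = Cel e h f φp φq * Uel p q φp φq := by
  have h1 := P_mul_C φp φq hS
  have h2 := Q_mul_C φp φq hS
  simp only [Uel, sub_mul, mul_sub, smul_mul_assoc, mul_smul_comm, h1, h2]
  module

end Calc

section Act

variable {V : Type} [AddCommGroup V] [Module ℂ V] [LieRingModule S V] [LieModule ℂ S V]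

lemma uact_mul (x y : UniversalEnvelopingAlgebra ℂ S) (v : V) :
    uact (x * y) v = uact x (uact y v) := by
  unfold uact; rw [map_mul]; rfl

lemma uact_one (v : V) : uact (1 : UniversalEnvelopingAlgebra ℂ S) v = v := by
  unfold uact; rw [map_one]; rfl

lemma uact_sub (x y : UniversalEnvelopingAlgebra ℂ S) (v : V) :
    uact (x - y) v = uact x v - uact y v := by
  unfold uact; rw [map_sub]; rfl

lemma uact_algebraMap (c : ℂ) (v : V) :
    uact (algebraMap ℂ (UniversalEnvelopingAlgebra ℂ S) c) v = c • v := by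
  unfold uact; rw [AlgHom.commutes]
  simp [Module.algebraMap_end_apply]

lemma uact_smul_v (u : UniversalEnvelopingAlgebra ℂ S) (c : ℂ) (v : V) :
    uact u (c • v) = c • uact u v := by
  unfold uact; exact map_smul _ c v

lemma uact_zero_v (u : UniversalEnvelopingAlgebra ℂ S) : uact u (0 : V) = 0 := by
  unfold uact; exact map_zero _

end Act

section Quot

variable (p q z : S) (φp φq : ℂ)

lemma mem_qwIdeal_p : ι ℂ p - algebraMap ℂ (UniversalEnvelopingAlgebra ℂ S) φp ∈
    qwIdeal p q z φp φq :=
  Submodule.subset_span (Set.mem_insert _ _)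

lemma mem_qwIdeal_q : ι ℂ q - algebraMap ℂ (UniversalEnvelopingAlgebra ℂ S) φq ∈
    qwIdeal p q z φp φq :=
  Submodule.subset_span (Set.mem_insert_of_mem _ (Set.mem_insert _ _))

lemma mem_qwIdeal_U : Uel p q φp φq ∈ qwIdeal p q z φp φq := by
  have e1 : Uel p q φp φq =
      (algebraMap ℂ (UniversalEnvelopingAlgebra ℂ S) φq) *
        (ι ℂ p - algebraMap ℂ (UniversalEnvelopingAlgebra ℂ S) φp) -
      (algebraMap ℂ (UniversalEnvelopingAlgebra ℂ S) φp) *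
        (ι ℂ q - algebraMap ℂ (UniversalEnvelopingAlgebra ℂ S) φq) := by
    simp only [Uel, mul_sub, ← Algebra.smul_def, ← map_mul]
    rw [mul_comm φq φp]
    abel
  rw [e1]
  refine sub_mem ?_ ?_
  · rw [← smul_eq_mul]
    exact Submodule.smul_mem _ _ (mem_qwIdeal_p p q z φp φq)
  · rw [← smul_eq_mul]
    exact Submodule.smul_mem _ _ (mem_qwIdeal_q p q z φp φq)

lemma mk_mul_p (x : UniversalEnvelopingAlgebra ℂ S) :
    (Submodule.Quotient.mk (x * (ι ℂ p - algebraMap ℂ _ φp)) : Mphi p q z φp φq) = 0 := by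
  rw [Submodule.Quotient.mk_eq_zero, ← smul_eq_mul]
  exact Submodule.smul_mem _ x (mem_qwIdeal_p p q z φp φq)

lemma mk_mul_q (x : UniversalEnvelopingAlgebra ℂ S) :
    (Submodule.Quotient.mk (x * (ι ℂ q - algebraMap ℂ _ φq)) : Mphi p q z φp φq) = 0 := by
  rw [Submodule.Quotient.mk_eq_zero, ← smul_eq_mul]
  exact Submodule.smul_mem _ x (mem_qwIdeal_q p q z φp φq)

lemma mk_mul_U (x : UniversalEnvelopingAlgebra ℂ S) :
    (Submodule.Quotient.mk (x * Uel p q φp φq) : Mphi p q z φp φq) = 0 := by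
  rw [Submodule.Quotient.mk_eq_zero, ← smul_eq_mul]
  exact Submodule.smul_mem _ x (mem_qwIdeal_U p q z φp φq)

end Quot

section Act2

variable {V : Type} [AddCommGroup V] [Module ℂ V] [LieRingModule S V] [LieModule ℂ S V]

lemma uact_sum {ι' : Type} (s : Finset ι') (u : UniversalEnvelopingAlgebra ℂ S) (g : ι' → V) :
    uact u (∑ i ∈ s, g i) = ∑ i ∈ s, uact u (g i) := by
  unfold uact; exact map_sum _ _ _

end Act2

section Poly

variable {e h f p q z : S} (φp φq : ℂ) (hS : IsSchrodinger e h f p q z)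
include hS

lemma comm_poly (a : ℂ[X]) :
    ∃ b : UniversalEnvelopingAlgebra ℂ S,
      ι ℂ p * aeval (Cel e h f φp φq) a =
        aeval (Cel e h f φp φq) a * ι ℂ p + φp • (b * Uel p q φp φq) ∧
      ι ℂ q * aeval (Cel e h f φp φq) a =
        aeval (Cel e h f φp φq) a * ι ℂ q + φq • (b * Uel p q φp φq) := by
  induction a using Polynomial.induction_on with
  | C c =>
      refine ⟨0, ?_, ?_⟩ <;> simp [aeval_C, Algebra.commutes]
  | add s t hs ht =>
      obtain ⟨b1, hb1p, hb1q⟩ := hs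
      obtain ⟨b2, hb2p, hb2q⟩ := ht
      refine ⟨b1 + b2, ?_, ?_⟩ <;>
      · simp only [map_add, mul_add, add_mul, hb1p, hb2p, hb1q, hb2q]
        module
  | monomial n c hrec =>
      obtain ⟨b, hbp, hbq⟩ := hrec
      have hx : (C c * X ^ (n + 1) : ℂ[X]) = (C c * X ^ n) * X := by ring
      rw [hx, map_mul, aeval_X]
      set A := aeval (Cel e h f φp φq) (C c * X ^ n) with hA
      refine ⟨A + b * Cel e h f φp φq, ?_, ?_⟩
      · calc ι ℂ p * (A * Cel e h f φp φq)
            = (ι ℂ p * A) * Cel e h f φp φq := by rw [mul_assoc]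
          _ = (A * ι ℂ p + φp • (b * Uel p q φp φq)) * Cel e h f φp φq := by rw [hbp]
          _ = A * (ι ℂ p * Cel e h f φp φq) +
              φp • (b * (Uel p q φp φq * Cel e h f φp φq)) := by
                rw [add_mul, smul_mul_assoc, mul_assoc, mul_assoc]
          _ = A * (Cel e h f φp φq * ι ℂ p + φp • Uel p q φp φq) +
              φp • (b * (Cel e h f φp φq * Uel p q φp φq)) := by
                rw [P_mul_C φp φq hS, U_mul_C φp φq hS]
          _ = (A * Cel e h f φp φq) * ι ℂ p +
              φp • ((A + b * Cel e h f φp φq) * Uel p q φp φq) := by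
                simp only [mul_add, add_mul, mul_smul_comm, mul_assoc, smul_add]
                module
      · calc ι ℂ q * (A * Cel e h f φp φq)
            = (ι ℂ q * A) * Cel e h f φp φq := by rw [mul_assoc]
          _ = (A * ι ℂ q + φq • (b * Uel p q φp φq)) * Cel e h f φp φq := by rw [hbq]
          _ = A * (ι ℂ q * Cel e h f φp φq) +
              φq • (b * (Uel p q φp φq * Cel e h f φp φq)) := by
                rw [add_mul, smul_mul_assoc, mul_assoc, mul_assoc]
          _ = A * (Cel e h f φp φq * ι ℂ q + φq • Uel p q φp φq) +
              φq • (b * (Cel e h f φp φq * Uel p q φp φq)) := by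
                rw [Q_mul_C φp φq hS, U_mul_C φp φq hS]
          _ = (A * Cel e h f φp φq) * ι ℂ q +
              φq • ((A + b * Cel e h f φp φq) * Uel p q φp φq) := by
                simp only [mul_add, add_mul, mul_smul_comm, mul_assoc, smul_add]
                module

lemma act_p_poly (a : ℂ[X]) :
    uact (ι ℂ p - algebraMap ℂ (UniversalEnvelopingAlgebra ℂ S) φp)
      (Submodule.Quotient.mk (aeval (Cel e h f φp φq) a) : Mphi p q z φp φq) = 0 := by
  obtain ⟨b, hbp, -⟩ := comm_poly φp φq hS a
  rw [uact_mk]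
  have key : (ι ℂ p - algebraMap ℂ (UniversalEnvelopingAlgebra ℂ S) φp) *
      aeval (Cel e h f φp φq) a =
      aeval (Cel e h f φp φq) a *
        (ι ℂ p - algebraMap ℂ (UniversalEnvelopingAlgebra ℂ S) φp) +
      φp • (b * Uel p q φp φq) := by
    rw [sub_mul, mul_sub, hbp, Algebra.commutes]
    abel
  rw [key, Submodule.Quotient.mk_add, Submodule.Quotient.mk_smul, mk_mul_p, mk_mul_U,
    smul_zero, add_zero]

lemma act_q_poly (a : ℂ[X]) :
    uact (ι ℂ q)
      (Submodule.Quotient.mk (aeval (Cel e h f φp φq) a) : Mphi p q z φp φq) =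
    φq • Submodule.Quotient.mk (aeval (Cel e h f φp φq) a) := by
  obtain ⟨b, -, hbq⟩ := comm_poly φp φq hS a
  rw [uact_mk]
  have key : ι ℂ q * aeval (Cel e h f φp φq) a =
      (aeval (Cel e h f φp φq) a *
        (ι ℂ q - algebraMap ℂ (UniversalEnvelopingAlgebra ℂ S) φq) +
      φq • (b * Uel p q φp φq)) + φq • aeval (Cel e h f φp φq) a := by
    rw [hbq, mul_sub]
    have h2 : aeval (Cel e h f φp φq) a * algebraMap ℂ (UniversalEnvelopingAlgebra ℂ S) φq =
        φq • aeval (Cel e h f φp φq) a := by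
      rw [← Algebra.commutes, ← Algebra.smul_def]
    rw [h2]
    abel
  rw [key, Submodule.Quotient.mk_add, Submodule.Quotient.mk_add, Submodule.Quotient.mk_smul,
    Submodule.Quotient.mk_smul, mk_mul_q, mk_mul_U, smul_zero, add_zero, zero_add]

lemma act_q_pow (a : ℂ[X]) (k : ℕ) :
    uact (ι ℂ q)
      (Submodule.Quotient.mk (ι ℂ f ^ k * aeval (Cel e h f φp φq) a) : Mphi p q z φp φq) =
    φq • Submodule.Quotient.mk (ι ℂ f ^ k * aeval (Cel e h f φp φq) a) := by
  induction k with
  | zero => simpa [pow_zero, one_mul] using act_q_poly φp φq hS a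
  | succ k ih =>
      have hqf : ι ℂ q * ι ℂ f = ι ℂ f * ι ℂ q := by
        have h0 : ⁅q, f⁆ = (0 : S) := by rw [← lie_skew, hS.lie_fq, neg_zero]
        have := comm_of_lie h0
        simpa using this
      rw [pow_succ', mul_assoc, ← uact_mk, ← uact_mul, hqf, uact_mul, ih, uact_smul_v,
        uact_mk, ← mul_assoc, ← pow_succ']

lemma act_pphi_pow (a : ℂ[X]) (j : ℕ) :
    uact (ι ℂ p - algebraMap ℂ (UniversalEnvelopingAlgebra ℂ S) φp)
      (Submodule.Quotient.mk (ι ℂ f ^ (j + 1) * aeval (Cel e h f φp φq) a) :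
        Mphi p q z φp φq) =
    (-(((j : ℂ) + 1) * φq)) •
      Submodule.Quotient.mk (ι ℂ f ^ j * aeval (Cel e h f φp φq) a) := by
  have hkey : (ι ℂ p - algebraMap ℂ (UniversalEnvelopingAlgebra ℂ S) φp) * ι ℂ f =
      ι ℂ f * (ι ℂ p - algebraMap ℂ (UniversalEnvelopingAlgebra ℂ S) φp) - ι ℂ q := by
    have hpf := comm_of_lie hS.lie_pf
    rw [sub_mul, mul_sub, hpf, map_neg, ← Algebra.commutes φp (ι ℂ f)]
    abel
  induction j with
  | zero =>
      rw [pow_one, ← uact_mk, ← uact_mul, hkey, uact_sub, uact_mul,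
        act_p_poly φp φq hS a, uact_zero_v, zero_sub, act_q_poly φp φq hS a]
      rw [pow_zero, one_mul]
      norm_num
  | succ j ih =>
      rw [pow_succ' (ι ℂ f) (j + 1), mul_assoc, ← uact_mk, ← uact_mul, hkey, uact_sub,
        uact_mul, ih, uact_smul_v, uact_mk, ← mul_assoc, ← pow_succ',
        act_q_pow φp φq hS a (j + 1), ← sub_smul]
      congr 1
      push_cast
      ring

lemma main_aux (m : ℕ) : ∀ a : ℕ → ℂ[X],
    uact ((ι ℂ p - algebraMap ℂ (UniversalEnvelopingAlgebra ℂ S) φp) ^ m)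
      (Submodule.Quotient.mk
        (∑ i ∈ Finset.range (m + 1), ι ℂ f ^ i * aeval (Cel e h f φp φq) (a i)) :
        Mphi p q z φp φq) =
    ((-1 : ℂ) ^ m * m.factorial * φq ^ m) •
      Submodule.Quotient.mk (aeval (Cel e h f φp φq) (a m)) := by
  induction m with
  | zero =>
      intro a
      simp [Finset.sum_range_one, uact_one]
  | succ m ih =>
      intro a
      rw [pow_succ, uact_mul]
      have hsum : (Submodule.Quotient.mk
          (∑ i ∈ Finset.range (m + 2), ι ℂ f ^ i * aeval (Cel e h f φp φq) (a i)) :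
            Mphi p q z φp φq) =
          ∑ i ∈ Finset.range (m + 2),
            (Submodule.Quotient.mk (ι ℂ f ^ i * aeval (Cel e h f φp φq) (a i)) :
              Mphi p q z φp φq) := by
        rw [← Submodule.mkQ_apply, map_sum]
        rfl
      rw [hsum, uact_sum, Finset.sum_range_succ']
      have h0 : uact (ι ℂ p - algebraMap ℂ (UniversalEnvelopingAlgebra ℂ S) φp)
          (Submodule.Quotient.mk (ι ℂ f ^ 0 * aeval (Cel e h f φp φq) (a 0)) :
            Mphi p q z φp φq) = 0 := by
        rw [pow_zero, one_mul]
        exact act_p_poly φp φq hS (a 0)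
      rw [h0, add_zero]
      have hterm : ∀ j, uact (ι ℂ p - algebraMap ℂ (UniversalEnvelopingAlgebra ℂ S) φp)
          (Submodule.Quotient.mk (ι ℂ f ^ (j + 1) * aeval (Cel e h f φp φq) (a (j + 1))) :
            Mphi p q z φp φq) =
          (Submodule.Quotient.mk (ι ℂ f ^ j *
            aeval (Cel e h f φp φq) (C (-(((j : ℂ) + 1) * φq)) * a (j + 1))) :
            Mphi p q z φp φq) := by
        intro j
        rw [act_pphi_pow φp φq hS (a (j + 1)) j, map_mul, aeval_C, ← Algebra.smul_def,
          mul_smul_comm, Submodule.Quotient.mk_smul]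
      simp only [hterm]
      have hsum2 : ∑ j ∈ Finset.range (m + 1),
          (Submodule.Quotient.mk (ι ℂ f ^ j *
            aeval (Cel e h f φp φq) (C (-(((j : ℂ) + 1) * φq)) * a (j + 1))) :
            Mphi p q z φp φq) =
          Submodule.Quotient.mk (∑ j ∈ Finset.range (m + 1), ι ℂ f ^ j *
            aeval (Cel e h f φp φq)
              ((fun i : ℕ => C (-(((i : ℂ) + 1) * φq)) * a (i + 1)) j)) := by
        rw [← Submodule.mkQ_apply, map_sum]
        rfl
      rw [hsum2, ih (fun i : ℕ => C (-(((i : ℂ) + 1) * φq)) * a (i + 1))]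
      rw [map_mul, aeval_C, ← Algebra.smul_def, Submodule.Quotient.mk_smul, smul_smul]
      congr 1
      push_cast [Nat.factorial_succ]
      ring

end Poly

/-- For `φ(p)φ(q) ≠ 0` and `a₀,…,a_m ∈ ℂ[x]`, in `M_φ` one has
`(p − φ(p))ᵐ·(Σ_{i=0}^{m} fⁱ aᵢ(C)·w) = (−1)ᵐ m! φ(q)ᵐ a_m(C)·w`. -/
theorem p_power_action
    (e h f p q z : S) (hS : IsSchrodinger e h f p q z)
    (φp φq : ℂ) (hφ : φp * φq ≠ 0)
    (m : ℕ) (a : ℕ → ℂ[X]) :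
    uact ((ι ℂ p - algebraMap ℂ _ φp) ^ m)
        (uact (∑ i ∈ Finset.range (m + 1), ι ℂ f ^ i * aeval (Cel e h f φp φq) (a i))
          (wvec p q z φp φq)) =
      ((-1 : ℂ) ^ m * m.factorial * φq ^ m) •
        uact (aeval (Cel e h f φp φq) (a m)) (wvec p q z φp φq) := by
  unfold wvec
  simp only [uact_mk, mul_one]
  rw [← uact_mk]
  exact main_aux φp φq hS m a

end QW
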